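/- Fix μ > 0 and ξ ∈ ℝ³ with ξ ≠ 0 and λ₁(ξ) ≠ λ₂(ξ), and let û₀ ∈ ℂ³ with ξ·û₀ = 0 and Ê₀ ∈ ℂ^{3×3}. Define, for t ≥ 0, û(ξ,t) = ((λ₁e^{λ₁t} − λ₂e^{λ₂t})/(λ₁−λ₂)) û₀ + ((e^{λ₁t} − e^{λ₂t})/(λ₁−λ₂)) (I − ξξᵀ/|ξ|²) iÊ₀ξ, and Ê(ξ,t) = i((e^{λ₁t} − e^{λ₂t})/(λ₁−λ₂)) û₀ξᵀ + ((λ₁e^{λ₂t} − λ₂e^{λ₁t})/(λ₁−λ₂)) (I − ξξᵀ/|ξ|²)Ê₀(ξξᵀ/|ξ|²) + Ê₀ − (I − ξξᵀ/|ξ|²)Ê₀(ξξᵀ/|ξ|²). Then (û,Ê) solves the Fourier-transformed linearized system: ∂_t û = −μ|ξ|²û + i(I − ξξᵀ/|ξ|²)Êξ, ∂_t Ê = iûξᵀ, with initial data (û,Ê)(ξ,0) = (û₀,Ê₀), and iξ·û(ξ,t) = 0 for all t ≥ 0. -/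

import Mathlib

/-!
`λ₁, λ₂` are the roots of `λ² + μ|ξ|²λ + |ξ|²`, so `λ₁ + λ₂ = -μ|ξ|²` and `λ₁λ₂ = |ξ|²`.
The time dependence is carried by the divided difference `b = (e^{λ₁t} - e^{λ₂t})/(λ₁ - λ₂)`,
its derivative `a`, and `c = a - (λ₁ + λ₂) b`; they satisfy `a' = (λ₁ + λ₂) a - λ₁λ₂ b` and
`c' = -λ₁λ₂ b`. Because `ξ·û₀ = 0` and `P = I - ξξᵀ/|ξ|²` annihilates `ξ`, the forcing term is
`P(Êξ) = i b |ξ|² û₀ + c P(Ê₀ξ)`, and both equations reduce to these scalar identities.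
-/

open MeasureTheory Real Set
open scoped ENNReal NNReal

noncomputable section

/-- Frequency space `ℝ³`. -/
abbrev X3 : Type := EuclideanSpace ℝ (Fin 3)

/-- A complex square root. -/
def csqrt (z : ℂ) : ℂ := z ^ ((1:ℂ)/2)

/-- `λ₁(ξ) = (−μ|ξ|² + √(μ²|ξ|⁴ − 4|ξ|²))/2`. -/
def lam1 (μ : ℝ) (ξ : X3) : ℂ :=
  (-(μ : ℂ) * (‖ξ‖ : ℂ) ^ 2 + csqrt ((μ : ℂ) ^ 2 * (‖ξ‖ : ℂ) ^ 4 - 4 * (‖ξ‖ : ℂ) ^ 2)) / 2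

/-- `λ₂(ξ) = (−μ|ξ|² − √(μ²|ξ|⁴ − 4|ξ|²))/2`. -/
def lam2 (μ : ℝ) (ξ : X3) : ℂ :=
  (-(μ : ℂ) * (‖ξ‖ : ℂ) ^ 2 - csqrt ((μ : ℂ) ^ 2 * (‖ξ‖ : ℂ) ^ 4 - 4 * (‖ξ‖ : ℂ) ^ 2)) / 2

/-- The projection `(I − ξξᵀ/|ξ|²) v`. -/
def projPerp (ξ : X3) (v : Fin 3 → ℂ) (i : Fin 3) : ℂ :=
  v i - (ξ i : ℂ) * (∑ k, (ξ k : ℂ) * v k) / ((‖ξ‖ : ℂ) ^ 2)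

/-- `û(ξ,t) = ((λ₁e^{λ₁t} − λ₂e^{λ₂t})/(λ₁−λ₂)) û₀
      + ((e^{λ₁t} − e^{λ₂t})/(λ₁−λ₂)) (I − ξξᵀ/|ξ|²) iÊ₀ξ`. -/
def uhatSol (μ : ℝ) (ξ : X3) (u0 : Fin 3 → ℂ) (E0 : Fin 3 → Fin 3 → ℂ)
    (t : ℝ) (i : Fin 3) : ℂ :=
  ((lam1 μ ξ * Complex.exp (lam1 μ ξ * t) - lam2 μ ξ * Complex.exp (lam2 μ ξ * t))
      / (lam1 μ ξ - lam2 μ ξ)) * u0 i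
  + ((Complex.exp (lam1 μ ξ * t) - Complex.exp (lam2 μ ξ * t)) / (lam1 μ ξ - lam2 μ ξ))
      * projPerp ξ (fun a => Complex.I * ∑ b, E0 a b * (ξ b : ℂ)) i

/-- The matrix `(I − ξξᵀ/|ξ|²) Ê₀ (ξξᵀ/|ξ|²)`. -/
def QE (ξ : X3) (E0 : Fin 3 → Fin 3 → ℂ) (i j : Fin 3) : ℂ :=
  ∑ k, projPerp ξ (fun a => E0 a k) i * ((ξ k : ℂ) * (ξ j : ℂ) / ((‖ξ‖ : ℂ) ^ 2))

/-- `Ê(ξ,t) = i((e^{λ₁t} − e^{λ₂t})/(λ₁−λ₂)) û₀ξᵀ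
      + ((λ₁e^{λ₂t} − λ₂e^{λ₁t})/(λ₁−λ₂)) (I − ξξᵀ/|ξ|²)Ê₀(ξξᵀ/|ξ|²)
      + Ê₀ − (I − ξξᵀ/|ξ|²)Ê₀(ξξᵀ/|ξ|²)`. -/
def EhatSol (μ : ℝ) (ξ : X3) (u0 : Fin 3 → ℂ) (E0 : Fin 3 → Fin 3 → ℂ)
    (t : ℝ) (i j : Fin 3) : ℂ :=
  Complex.I * ((Complex.exp (lam1 μ ξ * t) - Complex.exp (lam2 μ ξ * t))
      / (lam1 μ ξ - lam2 μ ξ)) * u0 i * (ξ j : ℂ)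
  + ((lam1 μ ξ * Complex.exp (lam2 μ ξ * t) - lam2 μ ξ * Complex.exp (lam1 μ ξ * t))
      / (lam1 μ ξ - lam2 μ ξ)) * QE ξ E0 i j
  + E0 i j - QE ξ E0 i j

section ExpDivDiff

variable (l₁ l₂ : ℂ)

def expDivDiff (t : ℝ) : ℂ :=
  (Complex.exp (l₁ * t) - Complex.exp (l₂ * t)) / (l₁ - l₂)

def expDivDiffDeriv (t : ℝ) : ℂ :=
  (l₁ * Complex.exp (l₁ * t) - l₂ * Complex.exp (l₂ * t)) / (l₁ - l₂)

def expDivDiffDual (t : ℝ) : ℂ :=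
  (l₁ * Complex.exp (l₂ * t) - l₂ * Complex.exp (l₁ * t)) / (l₁ - l₂)

lemma hasDerivAt_cexp_const_mul (l : ℂ) (t : ℝ) :
    HasDerivAt (fun s : ℝ => Complex.exp (l * s)) (l * Complex.exp (l * t)) t := by
  simpa [mul_comm] using ((Complex.ofRealCLM.hasDerivAt (x := t)).const_mul l).cexp

lemma hasDerivAt_expDivDiff (t : ℝ) :
    HasDerivAt (expDivDiff l₁ l₂) (expDivDiffDeriv l₁ l₂ t) t :=
  ((hasDerivAt_cexp_const_mul l₁ t).sub (hasDerivAt_cexp_const_mul l₂ t)).div_const _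

lemma hasDerivAt_expDivDiffDeriv (t : ℝ) :
    HasDerivAt (expDivDiffDeriv l₁ l₂)
      ((l₁ + l₂) * expDivDiffDeriv l₁ l₂ t - l₁ * l₂ * expDivDiff l₁ l₂ t) t := by
  refine ((((hasDerivAt_cexp_const_mul l₁ t).const_mul l₁).sub
    ((hasDerivAt_cexp_const_mul l₂ t).const_mul l₂)).div_const _).congr_deriv ?_
  simp only [expDivDiff, expDivDiffDeriv]
  ring

lemma hasDerivAt_expDivDiffDual (t : ℝ) :
    HasDerivAt (expDivDiffDual l₁ l₂) (-(l₁ * l₂) * expDivDiff l₁ l₂ t) t := by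
  refine ((((hasDerivAt_cexp_const_mul l₂ t).const_mul l₁).sub
    ((hasDerivAt_cexp_const_mul l₁ t).const_mul l₂)).div_const _).congr_deriv ?_
  simp only [expDivDiff]
  ring

lemma expDivDiffDual_eq (t : ℝ) :
    expDivDiffDual l₁ l₂ t = expDivDiffDeriv l₁ l₂ t - (l₁ + l₂) * expDivDiff l₁ l₂ t := by
  simp only [expDivDiff, expDivDiffDeriv, expDivDiffDual]
  ring

@[simp]
lemma expDivDiff_zero : expDivDiff l₁ l₂ 0 = 0 := by
  simp [expDivDiff]

variable {l₁ l₂}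

lemma expDivDiffDeriv_zero (h : l₁ ≠ l₂) : expDivDiffDeriv l₁ l₂ 0 = 1 := by
  simp [expDivDiffDeriv, div_self (sub_ne_zero.mpr h)]

lemma expDivDiffDual_zero (h : l₁ ≠ l₂) : expDivDiffDual l₁ l₂ 0 = 1 := by
  simp [expDivDiffDual, div_self (sub_ne_zero.mpr h)]

end ExpDivDiff

lemma csqrt_sq (z : ℂ) : csqrt z ^ 2 = z := by
  rcases eq_or_ne z 0 with rfl | h
  · simp [csqrt]
  · rw [csqrt, sq, ← Complex.cpow_add _ _ h]; norm_num

lemma lam1_add_lam2 (μ : ℝ) (ξ : X3) : lam1 μ ξ + lam2 μ ξ = -(μ : ℂ) * (‖ξ‖ : ℂ) ^ 2 := by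
  unfold lam1 lam2; ring

lemma lam1_mul_lam2 (μ : ℝ) (ξ : X3) : lam1 μ ξ * lam2 μ ξ = (‖ξ‖ : ℂ) ^ 2 := by
  unfold lam1 lam2
  linear_combination (-1 / 4 : ℂ) * csqrt_sq ((μ : ℂ) ^ 2 * (‖ξ‖ : ℂ) ^ 4 - 4 * (‖ξ‖ : ℂ) ^ 2)

lemma ofReal_norm_sq_eq_sum {ι : Type*} [Fintype ι] (x : EuclideanSpace ℝ ι) :
    (‖x‖ : ℂ) ^ 2 = ∑ k, (x k : ℂ) * x k := by
  rw [← Complex.ofReal_pow, EuclideanSpace.norm_sq_eq]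
  simp only [Real.norm_eq_abs, sq_abs]
  push_cast
  simp only [sq]

section Projection

variable {ξ : X3}

lemma projPerp_add (v w : Fin 3 → ℂ) (i : Fin 3) :
    projPerp ξ (v + w) i = projPerp ξ v i + projPerp ξ w i := by
  simp only [projPerp, Pi.add_apply, mul_add, Finset.sum_add_distrib]
  ring

lemma projPerp_smul (c : ℂ) (v : Fin 3 → ℂ) (i : Fin 3) :
    projPerp ξ (c • v) i = c * projPerp ξ v i := by
  simp only [projPerp, Pi.smul_apply, smul_eq_mul, mul_left_comm _ c, ← Finset.mul_sum]
  ring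

lemma projPerp_of_sum_mul_eq_zero {v : Fin 3 → ℂ} (h : ∑ k, (ξ k : ℂ) * v k = 0) (i : Fin 3) :
    projPerp ξ v i = v i := by
  simp [projPerp, h]

lemma sum_mul_projPerp (hξ : ξ ≠ 0) (v : Fin 3 → ℂ) :
    ∑ k, (ξ k : ℂ) * projPerp ξ v k = 0 := by
  have hN : (‖ξ‖ : ℂ) ^ 2 ≠ 0 := by simpa using hξ
  simp only [projPerp, mul_sub, Finset.sum_sub_distrib, ← mul_assoc, mul_div_assoc,
    ← Finset.sum_mul, ← ofReal_norm_sq_eq_sum, mul_div_cancel₀ _ hN, sub_self]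

lemma projPerp_projPerp (hξ : ξ ≠ 0) (v : Fin 3 → ℂ) (i : Fin 3) :
    projPerp ξ (projPerp ξ v) i = projPerp ξ v i :=
  projPerp_of_sum_mul_eq_zero (sum_mul_projPerp hξ v) i

lemma QE_eq (E0 : Fin 3 → Fin 3 → ℂ) (i j : Fin 3) :
    QE ξ E0 i j = projPerp ξ (fun a => ∑ b, E0 a b * (ξ b : ℂ)) i * ξ j / (‖ξ‖ : ℂ) ^ 2 := by
  simp only [QE, projPerp, Fin.sum_univ_three]
  ring

lemma sum_QE_mul (hξ : ξ ≠ 0) (E0 : Fin 3 → Fin 3 → ℂ) (a : Fin 3) :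
    ∑ b, QE ξ E0 a b * (ξ b : ℂ) = projPerp ξ (fun c => ∑ b, E0 c b * (ξ b : ℂ)) a := by
  have hN : (‖ξ‖ : ℂ) ^ 2 ≠ 0 := by simpa using hξ
  simp only [QE_eq, div_mul_eq_mul_div, mul_assoc, ← Finset.mul_sum, ← Finset.sum_div,
    ← ofReal_norm_sq_eq_sum, mul_div_cancel_right₀ _ hN]

end Projection

section Solution

variable {μ : ℝ} {ξ : X3} {u0 : Fin 3 → ℂ} {E0 : Fin 3 → Fin 3 → ℂ}

lemma uhatSol_apply (t : ℝ) (i : Fin 3) :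
    uhatSol μ ξ u0 E0 t i = expDivDiffDeriv (lam1 μ ξ) (lam2 μ ξ) t * u0 i
      + expDivDiff (lam1 μ ξ) (lam2 μ ξ) t
        * (Complex.I * projPerp ξ (fun a => ∑ b, E0 a b * (ξ b : ℂ)) i) := by
  rw [← projPerp_smul]
  rfl

lemma EhatSol_apply (t : ℝ) (i j : Fin 3) :
    EhatSol μ ξ u0 E0 t i j = Complex.I * expDivDiff (lam1 μ ξ) (lam2 μ ξ) t * u0 i * ξ j
      + expDivDiffDual (lam1 μ ξ) (lam2 μ ξ) t * QE ξ E0 i j + E0 i j - QE ξ E0 i j :=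
  rfl

lemma EhatSol_mulVec (hξ : ξ ≠ 0) (t : ℝ) :
    (fun a => ∑ b, EhatSol μ ξ u0 E0 t a b * (ξ b : ℂ))
      = (Complex.I * expDivDiff (lam1 μ ξ) (lam2 μ ξ) t * (‖ξ‖ : ℂ) ^ 2) • u0
        + (expDivDiffDual (lam1 μ ξ) (lam2 μ ξ) t - 1)
          • projPerp ξ (fun a => ∑ b, E0 a b * (ξ b : ℂ))
        + fun a => ∑ b, E0 a b * (ξ b : ℂ) := by
  funext a
  have hQ := sum_QE_mul hξ E0 a
  have hN := ofReal_norm_sq_eq_sum ξ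
  simp only [EhatSol_apply, Pi.add_apply, Pi.smul_apply, smul_eq_mul, Fin.sum_univ_three] at hQ hN ⊢
  linear_combination (expDivDiffDual (lam1 μ ξ) (lam2 μ ξ) t - 1) * hQ
    - Complex.I * expDivDiff (lam1 μ ξ) (lam2 μ ξ) t * u0 a * hN

lemma projPerp_EhatSol_mulVec (hξ : ξ ≠ 0) (hdiv : ∑ i, (ξ i : ℂ) * u0 i = 0) (t : ℝ)
    (i : Fin 3) :
    projPerp ξ (fun a => ∑ b, EhatSol μ ξ u0 E0 t a b * (ξ b : ℂ)) i
      = Complex.I * expDivDiff (lam1 μ ξ) (lam2 μ ξ) t * (‖ξ‖ : ℂ) ^ 2 * u0 i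
        + expDivDiffDual (lam1 μ ξ) (lam2 μ ξ) t
          * projPerp ξ (fun a => ∑ b, E0 a b * (ξ b : ℂ)) i := by
  rw [EhatSol_mulVec hξ, projPerp_add, projPerp_add, projPerp_smul, projPerp_smul,
    projPerp_of_sum_mul_eq_zero hdiv, projPerp_projPerp hξ]
  ring

lemma hasDerivAt_uhatSol (hξ : ξ ≠ 0) (hdiv : ∑ i, (ξ i : ℂ) * u0 i = 0) (t : ℝ) (i : Fin 3) :
    HasDerivAt (fun s : ℝ => uhatSol μ ξ u0 E0 s i)
      (-(μ : ℂ) * (‖ξ‖ : ℂ) ^ 2 * uhatSol μ ξ u0 E0 t i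
        + Complex.I * projPerp ξ (fun a => ∑ b, EhatSol μ ξ u0 E0 t a b * (ξ b : ℂ)) i) t := by
  simp only [uhatSol_apply]
  refine (((hasDerivAt_expDivDiffDeriv _ _ t).mul_const _).add
    ((hasDerivAt_expDivDiff _ _ t).mul_const _)).congr_deriv ?_
  rw [projPerp_EhatSol_mulVec hξ hdiv, expDivDiffDual_eq, lam1_add_lam2, lam1_mul_lam2]
  linear_combination -expDivDiff (lam1 μ ξ) (lam2 μ ξ) t * (‖ξ‖ : ℂ) ^ 2 * u0 i * Complex.I_sq

lemma hasDerivAt_EhatSol (hξ : ξ ≠ 0) (t : ℝ) (i j : Fin 3) :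
    HasDerivAt (fun s : ℝ => EhatSol μ ξ u0 E0 s i j)
      (Complex.I * uhatSol μ ξ u0 E0 t i * (ξ j : ℂ)) t := by
  have hQ : (‖ξ‖ : ℂ) ^ 2 * QE ξ E0 i j
      = projPerp ξ (fun a => ∑ b, E0 a b * (ξ b : ℂ)) i * ξ j := by
    rw [QE_eq, mul_div_cancel₀ _ (by simpa using hξ)]
  simp only [EhatSol_apply]
  refine (((((((hasDerivAt_expDivDiff _ _ t).const_mul Complex.I).mul_const _).mul_const _).add
    ((hasDerivAt_expDivDiffDual _ _ t).mul_const _)).add_const _).sub_const _).congr_deriv ?_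
  rw [uhatSol_apply, lam1_mul_lam2]
  linear_combination -expDivDiff (lam1 μ ξ) (lam2 μ ξ) t * hQ - expDivDiff (lam1 μ ξ) (lam2 μ ξ) t
    * projPerp ξ (fun a => ∑ b, E0 a b * (ξ b : ℂ)) i * ξ j * Complex.I_sq

lemma uhatSol_zero (hne : lam1 μ ξ ≠ lam2 μ ξ) (i : Fin 3) : uhatSol μ ξ u0 E0 0 i = u0 i := by
  simp [uhatSol_apply, expDivDiffDeriv_zero hne]

lemma EhatSol_zero (hne : lam1 μ ξ ≠ lam2 μ ξ) (i j : Fin 3) :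
    EhatSol μ ξ u0 E0 0 i j = E0 i j := by
  simp [EhatSol_apply, expDivDiffDual_zero hne]

lemma sum_mul_uhatSol (hξ : ξ ≠ 0) (hdiv : ∑ i, (ξ i : ℂ) * u0 i = 0) (t : ℝ) :
    ∑ i, (ξ i : ℂ) * uhatSol μ ξ u0 E0 t i = 0 := by
  simp only [uhatSol_apply, mul_add, Finset.sum_add_distrib, mul_left_comm (ξ _ : ℂ),
    ← Finset.mul_sum, hdiv, sum_mul_projPerp hξ, mul_zero, add_zero]

end Solution

theorem fourier_linearized_solution_general (μ : ℝ) (ξ : X3) (hξ : ξ ≠ 0)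
    (hne : lam1 μ ξ ≠ lam2 μ ξ) (u0 : Fin 3 → ℂ) (E0 : Fin 3 → Fin 3 → ℂ)
    (hdiv : ∑ i, (ξ i : ℂ) * u0 i = 0) :
    (∀ t : ℝ, 0 ≤ t → ∀ i : Fin 3,
      HasDerivAt (fun s : ℝ => uhatSol μ ξ u0 E0 s i)
        (-(μ : ℂ) * (‖ξ‖ : ℂ) ^ 2 * uhatSol μ ξ u0 E0 t i
          + Complex.I * projPerp ξ (fun a => ∑ b, EhatSol μ ξ u0 E0 t a b * (ξ b : ℂ)) i) t) ∧
    (∀ t : ℝ, 0 ≤ t → ∀ i j : Fin 3,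
      HasDerivAt (fun s : ℝ => EhatSol μ ξ u0 E0 s i j)
        (Complex.I * uhatSol μ ξ u0 E0 t i * (ξ j : ℂ)) t) ∧
    (∀ i, uhatSol μ ξ u0 E0 0 i = u0 i) ∧
    (∀ i j, EhatSol μ ξ u0 E0 0 i j = E0 i j) ∧
    (∀ t : ℝ, 0 ≤ t → Complex.I * ∑ i, (ξ i : ℂ) * uhatSol μ ξ u0 E0 t i = 0) :=
  ⟨fun t _ => hasDerivAt_uhatSol hξ hdiv t, fun t _ => hasDerivAt_EhatSol hξ t,
    uhatSol_zero hne, EhatSol_zero hne,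
    fun t _ => by rw [sum_mul_uhatSol hξ hdiv t, mul_zero]⟩

/-- Lemma 2.3: the explicit formulas `(û, Ê)` solve the Fourier-transformed linearized
incompressible viscoelastic system
`∂ₜû = −μ|ξ|²û + i(I − ξξᵀ/|ξ|²)Êξ`, `∂ₜÊ = iûξᵀ`, with the given initial data, and
remain divergence free: `iξ·û(ξ,t) = 0`. -/
theorem fourier_linearized_solution (μ : ℝ) (hμ : 0 < μ) (ξ : X3) (hξ : ξ ≠ 0)
    (hne : lam1 μ ξ ≠ lam2 μ ξ) (u0 : Fin 3 → ℂ) (E0 : Fin 3 → Fin 3 → ℂ)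
    (hdiv : ∑ i, (ξ i : ℂ) * u0 i = 0) :
    (∀ t : ℝ, 0 ≤ t → ∀ i : Fin 3,
      HasDerivAt (fun s : ℝ => uhatSol μ ξ u0 E0 s i)
        (-(μ : ℂ) * (‖ξ‖ : ℂ) ^ 2 * uhatSol μ ξ u0 E0 t i
          + Complex.I * projPerp ξ (fun a => ∑ b, EhatSol μ ξ u0 E0 t a b * (ξ b : ℂ)) i) t) ∧
    (∀ t : ℝ, 0 ≤ t → ∀ i j : Fin 3,
      HasDerivAt (fun s : ℝ => EhatSol μ ξ u0 E0 s i j)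
        (Complex.I * uhatSol μ ξ u0 E0 t i * (ξ j : ℂ)) t) ∧
    (∀ i, uhatSol μ ξ u0 E0 0 i = u0 i) ∧
    (∀ i j, EhatSol μ ξ u0 E0 0 i j = E0 i j) ∧
    (∀ t : ℝ, 0 ≤ t → Complex.I * ∑ i, (ξ i : ℂ) * uhatSol μ ξ u0 E0 t i = 0) :=
  fourier_linearized_solution_general μ ξ hξ hne u0 E0 hdiv

end
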